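/- arXiv:1710.04978 — 3 statements merged into one kernel-verified Lean document; each statement's English description precedes it below -/
import Mathlib

section
/- For any permutation π of [n] with n ≥ 1, P^{n-1}(π) is the identity permutation; i.e., every permutation of [n] is sortable by n−1 passes through a pop-stack. -/
/-- The identity permutation of `[n] = {1,…,n}` in one-line notation. -/
def idList (n : ℕ) : List ℕ := (List.range n).map (· + 1)

/-- `l` is (the one-line notation of) a permutation of `[n] = {1,…,n}`. -/
def IsPermOf (l : List ℕ) (n : ℕ) : Prop := l.Perm (idList n)

/-- One pass of the pop-stack machine: `stack` holds the current content of the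
stack (top first); a pop empties the whole stack onto the output. -/
def popAux : List ℕ → List ℕ → List ℕ
  | stack, [] => stack
  | stack, x :: xs =>
    match stack with
    | [] => popAux [x] xs
    | a :: _ => if x < a then popAux (x :: stack) xs else stack ++ popAux [x] xs

/-- The pop-stack sorting operator `P`, acting on one-line notations. -/
def popPass (l : List ℕ) : List ℕ := popAux [] l

/-- An operation sequence for permutations of `[n]`: a word of length `n+1` over
`{a, d}` (here `true` = `a`, `false` = `d`) beginning and ending with `a`. -/
def OpSeq (μ : List Bool) (n : ℕ) : Prop :=
  μ.length = n + 1 ∧ μ.head? = some true ∧ μ.getLast? = some true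

/-- Helper for blockwise reversal: `cur` is the current block, already reversed;
the `i`-th letter of the operation sequence precedes the `i`-th entry of the
permutation, and a letter `a = true` flushes the current block and starts a new one. -/
def revAux : List ℕ → List ℕ → List Bool → List ℕ
  | cur, [], _ => cur
  | cur, x :: xs, [] => revAux (x :: cur) xs []
  | cur, x :: xs, c :: cs =>
    if c then cur ++ revAux [x] xs cs else revAux (x :: cur) xs cs

/-- Blockwise reversal `rev(l, μ)` of `l` according to the operation sequence `μ`. -/
def rev (l : List ℕ) (μ : List Bool) : List ℕ := revAux [] l μ

/-- Tail of the ascent/descent word of a list (letters `c_2 … c_{n+1}`). -/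
def ascTail : List ℕ → List Bool
  | [] => []
  | [_] => [true]
  | x :: y :: rest => decide (x < y) :: ascTail (y :: rest)

/-- The ascent/descent word `w(π) = c_1 c_2 … c_{n+1}` of `π` (with `true` = `a`). -/
def ascWord (l : List ℕ) : List Bool := true :: ascTail l

/-- `L` is the decomposition of `π` into its maximal decreasing runs:
the blocks concatenate to `π`, each block is nonempty and strictly decreasing,
and at each boundary between consecutive blocks there is an ascent (maximality). -/
def RunDecomp (π : List ℕ) (L : List (List ℕ)) : Prop :=
  π = L.flatten ∧ (∀ b ∈ L, b ≠ []) ∧ (∀ b ∈ L, b.Chain' (· > ·)) ∧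
    L.Chain' (fun b c => ∀ x ∈ b.getLast?, ∀ y ∈ c.head?, x < y)

/-- The one-line notation of a permutation of `Fin n`, with values shifted to `{1,…,n}`. -/
def permToList {n : ℕ} (σ : Equiv.Perm (Fin n)) : List ℕ :=
  List.ofFn fun i => (σ i : ℕ) + 1

/-- The number of permutations of `[n]` sortable by `k` passes through a pop-stack. -/
def countSortable (k n : ℕ) : ℕ :=
  (Finset.univ.filter (fun σ : Equiv.Perm (Fin n) => popPass^[k] (permToList σ) = idList n)).card

/-- A semitrace of order `k` and length `n`: permutations `α 1, …, α (k+1)` of `[n]`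
with `α (k+1)` the identity, and operation sequences `μ 1, …, μ k`, such that
`α (i+1)` is the blockwise reversal of `α i` according to `μ i`. -/
def IsSemitrace (n k : ℕ) (α : ℕ → List ℕ) (μ : ℕ → List Bool) : Prop :=
  (∀ i, 1 ≤ i → i ≤ k + 1 → IsPermOf (α i) n) ∧
  (∀ i, 1 ≤ i → i ≤ k → OpSeq (μ i) n) ∧
  α (k + 1) = idList n ∧
  (∀ i, 1 ≤ i → i ≤ k → α (i + 1) = rev (α i) (μ i))

/-- `a` and `b` lie in the same block of `σ` with respect to the operation sequence `μ`:
they occupy positions `p ≤ q` with no bar (letter `a = true`) strictly between them. -/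
def SameBlock (σ : List ℕ) (μ : List Bool) (a b : ℕ) : Prop :=
  ∃ p q : ℕ, p ≤ q ∧ q < σ.length ∧
    ((σ.getD p 0 = a ∧ σ.getD q 0 = b) ∨ (σ.getD p 0 = b ∧ σ.getD q 0 = a)) ∧
    ∀ r, p < r → r ≤ q → μ.getD r false = false

/-- The number of descents of a list. -/
def descentCount (l : List ℕ) : ℕ :=
  ((List.range (l.length - 1)).filter (fun i => l.getD (i + 1) 0 < l.getD i 0)).length

/-- The layered permutation with the given block sizes, starting with value `start + 1`:
each block consists of consecutive values arranged in decreasing order. -/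
def layeredList : ℕ → List ℕ → List ℕ
  | _, [] => []
  | start, s :: rest =>
      ((List.range s).map (fun j => start + s - j)) ++ layeredList (start + s) rest

/-!
A pass of the pop-stack reverses the maximal decreasing runs, so it permutes the entries.
Fix a threshold `v` and record by a 0-1 word which entries exceed `v`. A run reads `1ᵃ0ᵇ` in
this word and is turned into `0ᵇ1ᵃ`. A suitable potential on 0-1 words, at most `n - 1`, drops
by at least one under every pass until it vanishes, and a list whose words all have potential
zero is sorted.
-/

/-- `R` is the first maximal decreasing run of `R ++ ρ`. -/
def IsFirstRun (R ρ : List ℕ) : Prop :=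
  R ≠ [] ∧ R.IsChain (· > ·) ∧ ∀ g ∈ R.getLast?, ∀ y ∈ ρ.head?, g ≤ y

lemma popAux_cons_of_lt {s : List ℕ} {x : ℕ} (l : List ℕ) (h : ∀ a ∈ s.head?, x < a) :
    popAux s (x :: l) = popAux (x :: s) l := by
  cases s with
  | nil => rfl
  | cons a s => exact if_pos (h a rfl)

lemma popAux_append_of_isChain (s R ρ : List ℕ) (h : (s.reverse ++ R).IsChain (· > ·)) :
    popAux s (R ++ ρ) = popAux (R.reverse ++ s) ρ := by
  induction R generalizing s with
  | nil => rfl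
  | cons r R ih =>
    have hrs : ∀ a ∈ s.head?, r < a := by
      simpa using (List.isChain_append.mp h).2.2
    rw [List.cons_append, popAux_cons_of_lt _ hrs, ih (r :: s) (by simpa using h)]
    simp

lemma popAux_cons_of_le {a : ℕ} (s : List ℕ) {ρ : List ℕ} (h : ∀ y ∈ ρ.head?, a ≤ y) :
    popAux (a :: s) ρ = a :: s ++ popPass ρ := by
  cases ρ with
  | nil => simp [popAux, popPass]
  | cons y ys => exact if_neg (not_lt.mpr (h y rfl))

lemma popPass_append_of_isFirstRun {R ρ : List ℕ} (h : IsFirstRun R ρ) :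
    popPass (R ++ ρ) = R.reverse ++ popPass ρ := by
  obtain ⟨hne, hchain, hlast⟩ := h
  obtain ⟨R', g, rfl⟩ := (List.eq_nil_or_concat R).resolve_left hne
  rw [List.concat_eq_append] at hchain hlast ⊢
  rw [popPass, popAux_append_of_isChain [] _ _ (by simpa using hchain)]
  simpa using popAux_cons_of_le R'.reverse (hlast g (by simp))

lemma exists_isFirstRun {l : List ℕ} (hl : l ≠ []) : ∃ R ρ, l = R ++ ρ ∧ IsFirstRun R ρ := by
  induction l with
  | nil => exact absurd rfl hl
  | cons x l ih =>
    rcases l with _ | ⟨y, l⟩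
    · exact ⟨[x], [], rfl, by simp, List.isChain_singleton x, by simp⟩
    by_cases hyx : y < x
    · obtain ⟨_ | ⟨r, R⟩, ρ, hyl, hne, hchain, hlast⟩ := ih (List.cons_ne_nil y l)
      · exact absurd rfl hne
      obtain ⟨rfl, rfl⟩ : y = r ∧ l = R ++ ρ := by simpa using hyl
      exact ⟨x :: y :: R, ρ, rfl, by simp, List.isChain_cons_cons.mpr ⟨hyx, hchain⟩,
        by simpa [List.getLast?_cons_cons] using hlast⟩
    · exact ⟨[x], y :: l, rfl, by simp, List.isChain_singleton x, by simpa using hyx⟩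

theorem firstRun_induction {motive : List ℕ → Prop} (nil : motive [])
    (append : ∀ R ρ, IsFirstRun R ρ → motive ρ → motive (R ++ ρ)) (l : List ℕ) : motive l := by
  induction h : l.length using Nat.strong_induction_on generalizing l with
  | _ N ih =>
    rcases eq_or_ne l [] with rfl | hl
    · exact nil
    obtain ⟨R, ρ, rfl, hR⟩ := exists_isFirstRun hl
    have : ρ.length < N := by
      have := List.length_pos_iff.mpr hR.1
      simp only [List.length_append] at h
      omega
    exact append R ρ hR (ih _ this ρ rfl)

theorem popPass_perm (l : List ℕ) : (popPass l).Perm l := by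
  induction l using firstRun_induction with
  | nil => rfl
  | append R ρ hR ih =>
    rw [popPass_append_of_isFirstRun hR]
    exact (List.reverse_perm R).append ih

theorem popPass_iterate_perm (k : ℕ) (l : List ℕ) : (popPass^[k] l).Perm l := by
  induction k generalizing l with
  | zero => rfl
  | succ k ih => exact (ih _).trans (popPass_perm l)

/-- Unfolded, `potential w` is the maximum, over the letters `true` of `w` followed by some
`false`, of the number of `true`s before it plus the number of `false`s after it. -/
def potential : List Bool → ℕ
  | [] => 0
  | false :: w => potential w
  | true :: w => if false ∈ w then max (w.count false) (potential w + 1) else 0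

@[simp] lemma potential_nil : potential [] = 0 := rfl

@[simp] lemma potential_false_cons (w : List Bool) : potential (false :: w) = potential w := rfl

lemma potential_true_cons (w : List Bool) :
    potential (true :: w) = if false ∈ w then max (w.count false) (potential w + 1) else 0 :=
  rfl

lemma potential_le_length_sub_one (w : List Bool) : potential w ≤ w.length - 1 := by
  induction w with
  | nil => simp
  | cons b w ih =>
    cases b
    · simp only [potential_false_cons, List.length_cons]
      omega
    · rw [potential_true_cons]
      split_ifs with hw
      · have := List.count_le_length (a := false) (l := w)
        have := List.length_pos_of_mem hw
        simp only [List.length_cons]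
        omega
      · exact Nat.zero_le _

lemma pairwise_le_of_potential_eq_zero {w : List Bool} (h : potential w = 0) :
    w.Pairwise (· ≤ ·) := by
  induction w with
  | nil => exact List.Pairwise.nil
  | cons b w ih =>
    cases b
    · exact List.Pairwise.cons (fun b _ => Bool.false_le b) (ih h)
    · rw [potential_true_cons] at h
      split_ifs at h with hw
      · omega
      · have hall : ∀ b ∈ true :: w, b = true := by simpa using hw
        exact List.pairwise_of_forall_mem_list fun a ha b hb => by rw [hall a ha, hall b hb]

@[simp] lemma potential_replicate_false_append (b : ℕ) (w : List Bool) :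
    potential (List.replicate b false ++ w) = potential w := by
  induction b with
  | zero => rfl
  | succ b ih => rwa [List.replicate_succ, List.cons_append, potential_false_cons]

lemma potential_replicate_true_append (a : ℕ) (w : List Bool) :
    potential (List.replicate (a + 1) true ++ w) =
      if false ∈ w then max (w.count false + a) (potential w + (a + 1)) else 0 := by
  induction a with
  | zero => simp [potential_true_cons]
  | succ a ih =>
    rw [List.replicate_succ, List.cons_append, potential_true_cons, ih]
    by_cases hw : false ∈ w
    · have hcount : (List.replicate (a + 1) true ++ w).count false = w.count false := by
        simp [List.count_replicate]
      rw [if_pos (by simp [hw]), if_pos hw, if_pos hw, hcount]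
      omega
    · simp [hw]

/-- In the application, a block without `0`s is never followed by a `0`: the decreasing run
it comes from would have continued. -/
lemma potential_swap_block {a b : ℕ} {u u' : List Bool}
    (hcount : u'.count false = u.count false) (hu : potential u' = 0 ∨ potential u' < potential u)
    (hb : b = 0 → u.head? ≠ some false) :
    potential (List.replicate b false ++ List.replicate a true ++ u') = 0 ∨
      potential (List.replicate b false ++ List.replicate a true ++ u') <
        potential (List.replicate a true ++ List.replicate b false ++ u) := by
  simp only [List.append_assoc, potential_replicate_false_append]
  obtain _ | a := a
  · simpa using hu
  by_cases hfalse : false ∈ u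
  swap
  · have : false ∉ u' := by rwa [← List.count_pos_iff, hcount, List.count_pos_iff]
    simp [potential_replicate_true_append, this]
  have hc : 0 < u.count false := List.count_pos_iff.mpr hfalse
  have hfalse' : false ∈ u' := by rwa [← List.count_pos_iff, hcount]
  rw [potential_replicate_true_append, potential_replicate_true_append, if_pos hfalse',
    if_pos (by simp [hfalse]), List.count_append, List.count_replicate_self,
    potential_replicate_false_append]
  right
  obtain _ | b := b
  · rcases u with _ | ⟨_ | _, u₀⟩
    · simp at hfalse
    · simp at hb
    · have hfalse₀ : false ∈ u₀ := by simpa using hfalse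
      have : u₀.count false ≤ potential (true :: u₀) ∧ 0 < potential (true :: u₀) := by
        rw [potential_true_cons, if_pos hfalse₀]
        omega
      have : (true :: u₀).count false = u₀.count false := by simp
      omega
  · omega

def thresholdWord (v : ℕ) (l : List ℕ) : List Bool := l.map (v < ·)

lemma thresholdWord_append (v : ℕ) (l₁ l₂ : List ℕ) :
    thresholdWord v (l₁ ++ l₂) = thresholdWord v l₁ ++ thresholdWord v l₂ :=
  List.map_append

lemma thresholdWord_reverse (v : ℕ) (l : List ℕ) :
    thresholdWord v l.reverse = (thresholdWord v l).reverse :=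
  List.map_reverse

lemma thresholdWord_of_isChain (v : ℕ) {R : List ℕ} (h : R.IsChain (· > ·)) :
    ∃ a b, thresholdWord v R = List.replicate a true ++ List.replicate b false := by
  induction R with
  | nil => exact ⟨0, 0, rfl⟩
  | cons x R ih =>
    obtain ⟨a, b, hR⟩ := ih h.tail
    by_cases hvx : v < x
    · exact ⟨a + 1, b, by simp [thresholdWord, hvx, ← hR, List.replicate_succ]⟩
    refine ⟨0, b + 1, ?_⟩
    obtain _ | a := a
    · simp_all [thresholdWord, List.replicate_succ]
    obtain _ | ⟨y, R⟩ := R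
    · simp [thresholdWord, List.replicate_succ] at hR
    have hvy : v < y := by simp_all [thresholdWord, List.replicate_succ]
    have hyx : y < x := (List.isChain_cons_cons.mp h).1
    omega

lemma thresholdWord_of_isFirstRun (v : ℕ) {R ρ : List ℕ} (h : IsFirstRun R ρ) :
    ∃ a b, thresholdWord v R = List.replicate a true ++ List.replicate b false ∧
      (b = 0 → (thresholdWord v ρ).head? ≠ some false) := by
  obtain ⟨a, b, hR⟩ := thresholdWord_of_isChain v h.2.1
  refine ⟨a, b, hR, ?_⟩
  rintro rfl
  obtain ⟨g, hg⟩ := Option.ne_none_iff_exists'.mp (List.getLast?_eq_none_iff.not.mpr h.1)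
  have hvg : v < g := by
    have : decide (v < g) ∈ thresholdWord v R := List.mem_map_of_mem (List.mem_of_getLast? hg)
    simp_all
  cases ρ with
  | nil => simp [thresholdWord]
  | cons y ρ => simpa [thresholdWord] using hvg.trans_le (h.2.2 g hg y rfl)

theorem potential_thresholdWord_popPass_eq_zero_or_lt (v : ℕ) (l : List ℕ) :
    potential (thresholdWord v (popPass l)) = 0 ∨
      potential (thresholdWord v (popPass l)) < potential (thresholdWord v l) := by
  induction l using firstRun_induction with
  | nil => left; rfl
  | append R ρ hR ih =>
    obtain ⟨a, b, hab, hb⟩ := thresholdWord_of_isFirstRun v hR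
    have hcount := ((popPass_perm ρ).map (fun x => decide (v < x))).count_eq false
    rw [popPass_append_of_isFirstRun hR, thresholdWord_append, thresholdWord_append,
      thresholdWord_reverse, hab, List.reverse_append, List.reverse_replicate,
      List.reverse_replicate]
    exact potential_swap_block hcount ih hb

lemma pairwise_le_of_potential_thresholdWord_eq_zero {l : List ℕ}
    (h : ∀ v, potential (thresholdWord v l) = 0) : l.Pairwise (· ≤ ·) := by
  refine List.pairwise_iff_forall_sublist.mpr fun {x y} hxy => ?_
  have := List.pairwise_iff_forall_sublist.mp (pairwise_le_of_potential_eq_zero (h y))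
    (hxy.map (fun z => decide (y < z)))
  simpa [Bool.le_iff_imp] using this

theorem pairwise_le_popPass_iterate {k : ℕ} {l : List ℕ}
    (h : ∀ v, potential (thresholdWord v l) ≤ k) : (popPass^[k] l).Pairwise (· ≤ ·) := by
  induction k generalizing l with
  | zero => exact pairwise_le_of_potential_thresholdWord_eq_zero fun v => Nat.le_zero.mp (h v)
  | succ k ih =>
    refine ih fun v => ?_
    rcases potential_thresholdWord_popPass_eq_zero_or_lt v l with h0 | hlt
    · omega
    · exact Nat.le_of_lt_succ (hlt.trans_le (h v))

lemma pairwise_le_idList (n : ℕ) : (idList n).Pairwise (· ≤ ·) :=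
  List.pairwise_map.mpr (List.pairwise_lt_range.imp fun h => by omega)

theorem sortable_by_n_sub_one_general (n : ℕ) (π : List ℕ) (h : IsPermOf π n) :
    popPass^[n - 1] π = idList n := by
  have hlen : π.length = n := by simpa [idList] using h.length_eq
  have hsorted : (popPass^[n - 1] π).Pairwise (· ≤ ·) :=
    pairwise_le_popPass_iterate fun v => by
      simpa [thresholdWord, hlen] using potential_le_length_sub_one (thresholdWord v π)
  exact ((popPass_iterate_perm _ π).trans h).eq_of_pairwise' hsorted (pairwise_le_idList n)

/-- Every permutation of `[n]` (with `n ≥ 1`) is sortable by `n - 1` passes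
through a pop-stack. -/
theorem sortable_by_n_sub_one (n : ℕ) (hn : 1 ≤ n) (π : List ℕ) (h : IsPermOf π n) :
    popPass^[n - 1] π = idList n :=
  sortable_by_n_sub_one_general n π h
end

section
/- Let a and b be two values that form a violation in row i of a semitrace of order k (i.e., in the permutation α_i, a and b are adjacent with a appearing before b, and either a > b with a bar between them, or a < b with no bar between them, where bars are given by the ascent/descent word of the row below). Then a and b appear in descending order (a before b and a > b, or b before a and b > a, accordingly) in the permutation α_{i+1}. -/
/-!
Blockwise reversal keeps the relative order of two entries lying in different blocks and
reverses the order of two entries lying in the same block. Adjacent entries at positions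
`j, j + 1` of `α i` are separated by a bar exactly when the letter of `μ i` at index `j + 1`
is `a`, so a violation (a descent across a bar or an ascent within a block) becomes a pair in
decreasing order in `α (i + 1)`; as `α (i + 1)` has no repeated entries, that order is the order
of the `idxOf` positions.
-/

section

open List

theorem List.idxOf_lt_idxOf_of_pair_sublist {α : Type*} [BEq α] [LawfulBEq α] {l : List α}
    {x y : α} (h : [x, y] <+ l) (hl : l.Nodup) : l.idxOf x < l.idxOf y := by
  obtain ⟨r₁, r₂, rfl, hx, hy⟩ := cons_sublist_iff.1 h
  have hy₁ : y ∉ r₁ := fun hy₁ => disjoint_of_nodup_append hl hy₁ (singleton_sublist.1 hy)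
  rw [idxOf_append_of_mem hx, idxOf_append_of_notMem hy₁]
  exact (idxOf_lt_length_of_mem hx).trans_le (Nat.le_add_right _ _)

theorem nodup_idList (n : ℕ) : (idList n).Nodup :=
  nodup_range.map (add_left_injective 1)

theorem revAux_cons (cur : List ℕ) (x : ℕ) (xs : List ℕ) (μ : List Bool) :
    revAux cur (x :: xs) μ =
      if μ.headD false then cur ++ revAux [x] xs μ.tail else revAux (x :: cur) xs μ.tail := by
  rcases μ with _ | ⟨_ | _, μ⟩ <;> rfl

theorem sublist_revAux (cur l : List ℕ) (μ : List Bool) : cur <+ revAux cur l μ := by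
  induction l generalizing cur μ with
  | nil => exact Sublist.refl cur
  | cons x xs ih =>
    rw [revAux_cons]
    split
    · exact sublist_append_left _ _
    · exact (sublist_cons_self x cur).trans (ih _ _)

theorem sublist_revAux_cons_of_forall {s cur : List ℕ} {x : ℕ} {xs : List ℕ} {μ : List Bool}
    (h : ∀ cur', s <+ revAux (x :: cur') xs μ.tail) : s <+ revAux cur (x :: xs) μ := by
  rw [revAux_cons]
  split
  · exact (h []).trans (sublist_append_right _ _)
  · exact h cur

theorem pair_sublist_revAux_cons_cons (a b : ℕ) (cur ys : List ℕ) (μ : List Bool) :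
    (if μ.headD false then [a, b] else [b, a]) <+ revAux (a :: cur) (b :: ys) μ := by
  rw [revAux_cons]
  split
  · have hb : b ∈ revAux [b] ys μ.tail := (sublist_revAux [b] ys _).subset (mem_singleton_self b)
    exact cons_sublist_cons.2 (singleton_sublist.2 (mem_append_right cur hb))
  · exact (sublist_append_left [b, a] cur).trans (sublist_revAux _ _ _)

theorem pair_sublist_revAux_of_adjacent {l : List ℕ} {j a b : ℕ} (ha : l[j]? = some a)
    (hb : l[j + 1]? = some b) (cur : List ℕ) (μ : List Bool) :
    (if μ.getD (j + 1) false then [a, b] else [b, a]) <+ revAux cur l μ := by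
  induction l generalizing j cur μ with
  | nil => simp at ha
  | cons x xs ih =>
    have hμ : μ.getD (j + 1) false = μ.tail.getD j false := by simp
    rw [hμ]
    refine sublist_revAux_cons_of_forall fun cur' => ?_
    cases j with
    | zero =>
      cases xs with
      | nil => simp at hb
      | cons y ys =>
        obtain ⟨rfl, rfl⟩ : x = a ∧ y = b := ⟨by simpa using ha, by simpa using hb⟩
        rw [← headD_eq_getD]
        exact pair_sublist_revAux_cons_cons x y cur' ys _
    | succ j =>
      simp only [getElem?_cons_succ] at ha hb
      exact ih ha hb _ _

theorem pair_sublist_rev_of_adjacent {l : List ℕ} {j a b : ℕ} (ha : l[j]? = some a)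
    (hb : l[j + 1]? = some b) (μ : List Bool) :
    (if μ.getD (j + 1) false then [a, b] else [b, a]) <+ rev l μ :=
  pair_sublist_revAux_of_adjacent ha hb [] μ

end

/-- If two values `a` and `b` form a violation in row `i` of a semitrace
(adjacent, and either a descent separated by a bar or an ascent not separated by
a bar), then they appear in descending order in row `i + 1`. -/
theorem violation_descending (n k : ℕ) (α : ℕ → List ℕ) (μ : ℕ → List Bool)
    (hT : IsSemitrace n k α μ) (i : ℕ) (hi1 : 1 ≤ i) (hik : i ≤ k)
    (j a b : ℕ) (hj : j + 1 < (α i).length)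
    (ha : (α i).getD j 0 = a) (hb : (α i).getD (j + 1) 0 = b)
    (hviol : (b < a ∧ (μ i).getD (j + 1) false = true) ∨
             (a < b ∧ (μ i).getD (j + 1) false = false)) :
    (α (i + 1)).idxOf (max a b) < (α (i + 1)).idxOf (min a b) := by
  obtain ⟨hperm, -, -, hrev⟩ := hT
  have hnd : (α (i + 1)).Nodup :=
    (hperm (i + 1) (by omega) (by omega)).nodup_iff.2 (nodup_idList n)
  have ha' : (α i)[j]? = some a := by
    rw [← ha, List.getD_eq_getElem?_getD, List.getElem?_eq_getElem (by omega)]; rfl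
  have hb' : (α i)[j + 1]? = some b := by
    rw [← hb, List.getD_eq_getElem?_getD, List.getElem?_eq_getElem hj]; rfl
  have hsub := hrev i hi1 hik ▸ pair_sublist_rev_of_adjacent ha' hb' (μ i)
  rcases hviol with ⟨hba, hbar⟩ | ⟨hab, hbar⟩
  · rw [hbar, if_pos rfl] at hsub
    rw [max_eq_left hba.le, min_eq_right hba.le]
    exact List.idxOf_lt_idxOf_of_pair_sublist hsub hnd
  · rw [hbar, if_neg Bool.false_ne_true] at hsub
    rw [max_eq_right hab.le, min_eq_left hab.le]
    exact List.idxOf_lt_idxOf_of_pair_sublist hsub hnd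
end

section
/- If π is a permutation of [n] and P(π) = identity, then π avoids the patterns 231 and 312: there are no indices i < j < l with π(l) < π(i) < π(j), and no indices i < j < l with π(j) < π(l) < π(i). -/
/-
If `P(π)` is sorted, then `π` is layered: its maximal decreasing runs `B₁ B₂ …` satisfy
`B₁ < B₂ < …` elementwise, since `P` reverses each run in place. In a layered list an entry
`c` that is smaller than an earlier entry `a` lies in the block of `a`, and so does every entry
between them; hence every subsequence `a b c` with `c < a` is decreasing, which rules out both
`231` and `312`.
-/

theorem List.triple_sublist_append_cases {α : Type*} {B R : List α} {a b c : α}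
    (h : [a, b, c].Sublist (B ++ R)) :
    [a, b, c].Sublist B ∨ [a, b, c].Sublist R ∨ (a ∈ B ∧ c ∈ R) := by
  obtain ⟨l₁, l₂, heq, h₁, h₂⟩ := List.sublist_append_iff.mp h
  rcases l₁ with _ | ⟨p, _ | ⟨q, _ | ⟨r, _ | ⟨s, t⟩⟩⟩⟩
  · exact Or.inr (Or.inl (by simpa [heq] using h₂))
  · obtain ⟨rfl, rfl⟩ : p = a ∧ l₂ = [b, c] := by simpa using heq.symm
    exact Or.inr (Or.inr ⟨h₁.subset (by simp), h₂.subset (by simp)⟩)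
  · obtain ⟨rfl, rfl, rfl⟩ : p = a ∧ q = b ∧ l₂ = [c] := by simpa using heq.symm
    exact Or.inr (Or.inr ⟨h₁.subset (by simp), h₂.subset (by simp)⟩)
  · obtain ⟨rfl, rfl, rfl, rfl⟩ : p = a ∧ q = b ∧ r = c ∧ l₂ = [] := by
      simpa using heq.symm
    exact Or.inl h₁
  · simp at heq

theorem List.getD_triple_sublist {α : Type*} {l : List α} {i j k : ℕ} (d : α)
    (hij : i < j) (hjk : j < k) (hk : k < l.length) : [l.getD i d, l.getD j d, l.getD k d].Sublist l := by
  have hj : j < l.length := hjk.trans hk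
  have hi : i < l.length := hij.trans hj
  rw [List.getD_eq_getElem _ _ hi, List.getD_eq_getElem _ _ hj, List.getD_eq_getElem _ _ hk]
  have hpw : List.Pairwise (fun x y : Fin l.length => (x : ℕ) < y)
      [⟨i, hi⟩, ⟨j, hj⟩, ⟨k, hk⟩] := by
    simp only [List.pairwise_cons, List.mem_cons, List.not_mem_nil]
    grind
  simpa using List.map_getElem_sublist hpw

section Layered

variable {α : Type*} [LinearOrder α]

inductive IsLayered : List α → Prop
  | nil : IsLayered []
  | append {B R : List α} : B.Pairwise (· > ·) → (∀ a ∈ B, ∀ c ∈ R, a < c) → IsLayered R →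
      IsLayered (B ++ R)

theorem IsLayered.lt_lt_of_sublist {l : List α} (hl : IsLayered l) {a b c : α}
    (h : [a, b, c].Sublist l) (hca : c < a) : c < b ∧ b < a := by
  induction hl with
  | nil => simp at h
  | @append B R hB hBR _ ih =>
    rcases List.triple_sublist_append_cases h with hB' | hR | ⟨ha, hc⟩
    · have hdec := hB.sublist hB'
      simp only [List.pairwise_cons, List.mem_cons] at hdec
      exact ⟨hdec.2.1 c (Or.inl rfl), hdec.1 b (Or.inl rfl)⟩
    · exact ih hR
    · exact (lt_asymm hca (hBR a ha c hc)).elim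

end Layered

theorem popAux_perm (xs : List ℕ) : ∀ stack, (popAux stack xs).Perm (stack ++ xs) := by
  induction xs with
  | nil => intro stack; simp [popAux]
  | cons x xs ih =>
    intro stack
    match stack with
    | [] => simpa [popAux] using ih [x]
    | a :: s =>
      rw [popAux]
      split
      · exact (ih _).trans List.perm_middle.symm
      · exact (ih [x]).append_left (a :: s)

-- `stack` is the current decreasing run, reversed.
theorem isLayered_of_popAux_pairwise (xs : List ℕ) :
    ∀ stack, (popAux stack xs).Pairwise (· < ·) → IsLayered (stack.reverse ++ xs) := by
  induction xs with
  | nil =>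
    intro stack hs
    rw [popAux] at hs
    simpa using IsLayered.append (List.pairwise_reverse.mpr hs) (by simp) IsLayered.nil
  | cons x xs ih =>
    intro stack hs
    match stack with
    | [] => simpa [popAux] using ih [x] hs
    | a :: s =>
      rw [popAux] at hs
      split at hs
      · simpa using ih (x :: a :: s) hs
      · obtain ⟨hstack, hrest, hlt⟩ := List.pairwise_append.mp hs
        refine IsLayered.append (List.pairwise_reverse.mpr hstack) ?_ (by simpa using ih [x] hrest)
        intro p hp q hq
        exact hlt p (List.mem_reverse.mp hp) q ((popAux_perm xs [x]).mem_iff.mpr hq)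

theorem isLayered_of_popPass_pairwise {π : List ℕ} (hs : (popPass π).Pairwise (· < ·)) :
    IsLayered π := by
  simpa using isLayered_of_popAux_pairwise π [] hs

theorem pairwise_lt_idList (n : ℕ) : (idList n).Pairwise (· < ·) :=
  (List.pairwise_lt_range (n := n)).map _ fun _ _ h => Nat.add_lt_add_right h 1

theorem one_pass_avoids_231_312_general (n : ℕ) (π : List ℕ)
    (hs : popPass π = idList n) :
    (¬∃ i j l, i < j ∧ j < l ∧ l < π.length ∧
        π.getD l 0 < π.getD i 0 ∧ π.getD i 0 < π.getD j 0) ∧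
    (¬∃ i j l, i < j ∧ j < l ∧ l < π.length ∧
        π.getD j 0 < π.getD l 0 ∧ π.getD l 0 < π.getD i 0) := by
  have hπ : IsLayered π := isLayered_of_popPass_pairwise (hs ▸ pairwise_lt_idList n)
  constructor
  · rintro ⟨i, j, l, hij, hjl, hl, hli, hij'⟩
    exact (hπ.lt_lt_of_sublist (List.getD_triple_sublist 0 hij hjl hl) hli).2.not_gt hij'
  · rintro ⟨i, j, l, hij, hjl, hl, hjl', hli⟩
    exact (hπ.lt_lt_of_sublist (List.getD_triple_sublist 0 hij hjl hl) hli).1.not_gt hjl'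

/-- A permutation sorted by one pop-stack pass avoids the patterns `231` and `312`. -/
theorem one_pass_avoids_231_312 (n : ℕ) (π : List ℕ) (h : IsPermOf π n)
    (hs : popPass π = idList n) :
    (¬∃ i j l, i < j ∧ j < l ∧ l < π.length ∧
        π.getD l 0 < π.getD i 0 ∧ π.getD i 0 < π.getD j 0) ∧
    (¬∃ i j l, i < j ∧ j < l ∧ l < π.length ∧
        π.getD j 0 < π.getD l 0 ∧ π.getD l 0 < π.getD i 0) :=
  one_pass_avoids_231_312_general n π hs
end
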